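/- For every k ≥ 1, the element b^{2·3ᵏ} of G_A fixes the word 1^{3ᵏ} (the letter 1 repeated 3ᵏ times) and permutes the three words 1^{3ᵏ}x (x ∈ X) as the 3-cycle in the last letter: b^{2·3ᵏ}(1^{3ᵏ}1) = 1^{3ᵏ}2, b^{2·3ᵏ}(1^{3ᵏ}2) = 1^{3ᵏ}3, and b^{2·3ᵏ}(1^{3ᵏ}3) = 1^{3ᵏ}1. -/

import Mathlib

/-!
We formalize the automaton `A` of the paper: alphabet `X = {1,2,3}` is encoded as
`Fin 3` (letter `i+1` ↦ `i`), states `a, b, c` are encoded as `0, 1, 2 : Fin 3`.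
Each state induces a permutation of the space `ℕ → Fin 3` of infinite sequences.

Note on conventions: in the paper, products of tree automorphisms compose
left-to-right (in a word `s₁s₂⋯sₙ`, the letter `s₁` acts first); in Mathlib,
`(f * g) w = f (g w)`, i.e. the right factor acts first.  Hence a paper word
`uv` is rendered as the Lean product `v * u`; e.g. the paper's `α = ab⁻¹`
(apply `a`, then `b⁻¹`) is `b⁻¹ * a` below.
-/

namespace Lamplighter

section Generic

variable {S X : Type*}

/-- The state of the automaton after reading the first `n` letters of `w`, starting at `s`. -/
def run (nxt : S → X → S) (s : S) (w : ℕ → X) : ℕ → S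
  | 0 => s
  | n + 1 => nxt (run nxt s w n) (w n)

/-- The output sequence of the automaton started in state `s` reading `w`. -/
def fwd (nxt : S → X → S) (out : S → Equiv.Perm X) (s : S) (w : ℕ → X) : ℕ → X :=
  fun n => out (run nxt s w n) (w n)

/-- Transition function of the inverse automaton. -/
def invNxt (nxt : S → X → S) (out : S → Equiv.Perm X) (s : S) (y : X) : S :=
  nxt s ((out s).symm y)

/-- The action of the inverse automaton, started at state `s`. -/
def bwd (nxt : S → X → S) (out : S → Equiv.Perm X) (s : S) (y : ℕ → X) : ℕ → X :=
  fun n => (out (run (invNxt nxt out) s y n)).symm (y n)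

theorem run_inv_fwd (nxt : S → X → S) (out : S → Equiv.Perm X) (s : S) (w : ℕ → X) :
    ∀ n, run (invNxt nxt out) s (fwd nxt out s w) n = run nxt s w n := by
  intro n
  induction n with
  | zero => rfl
  | succ n ih => simp [run, ih, invNxt, fwd]

theorem run_bwd (nxt : S → X → S) (out : S → Equiv.Perm X) (s : S) (y : ℕ → X) :
    ∀ n, run nxt s (bwd nxt out s y) n = run (invNxt nxt out) s y n := by
  intro n
  induction n with
  | zero => rfl
  | succ n ih => simp [run, ih, bwd, invNxt]

/-- The permutation of the space of infinite sequences induced by state `s`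
of an invertible automaton. -/
def statePerm (nxt : S → X → S) (out : S → Equiv.Perm X) (s : S) : Equiv.Perm (ℕ → X) where
  toFun := fwd nxt out s
  invFun := bwd nxt out s
  left_inv := fun w => funext fun n => by simp [bwd, run_inv_fwd, fwd]
  right_inv := fun y => funext fun n => by simp [fwd, run_bwd, bwd]

end Generic

/-- The alphabet `X = {1,2,3}`, encoded as `Fin 3`. -/
abbrev X3 := Fin 3

/-- Transition function of the automaton `A` (states `a = 0`, `b = 1`, `c = 2`):
from `a`: `1 ↦ a, 2 ↦ b, 3 ↦ c`; from `b`: `1 ↦ c, 2 ↦ a, 3 ↦ b`;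
from `c`: `1 ↦ b, 2 ↦ c, 3 ↦ a`. -/
def nxtA : Fin 3 → X3 → Fin 3 := ![![0, 1, 2], ![2, 0, 1], ![1, 2, 0]]

/-- Output permutations of the automaton `A`: state `a` acts on letters as the
transposition `(2 3)`, state `b` as `(1 3)`, state `c` as `(1 2)`. -/
def outA : Fin 3 → Equiv.Perm X3 := ![Equiv.swap 1 2, Equiv.swap 0 2, Equiv.swap 0 1]

/-- The permutation of `X^ℕ` given by state `a`. -/
def a : Equiv.Perm (ℕ → X3) := statePerm nxtA outA 0

/-- The permutation of `X^ℕ` given by state `b`. -/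
def b : Equiv.Perm (ℕ → X3) := statePerm nxtA outA 1

/-- The permutation of `X^ℕ` given by state `c`. -/
def c : Equiv.Perm (ℕ → X3) := statePerm nxtA outA 2

/-- The group `G_A` generated by the automaton `A`. -/
def GA : Subgroup (Equiv.Perm (ℕ → X3)) := Subgroup.closure {a, b, c}

/-- The element `α = ab⁻¹` of the paper (first apply `a`, then `b⁻¹`). -/
def α : Equiv.Perm (ℕ → X3) := b⁻¹ * a

/-- The set `W` of permutations acting coordinatewise by a sequence of even
permutations of the alphabet. -/
def W : Set (Equiv.Perm (ℕ → X3)) :=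
  {g | ∃ π : ℕ → Equiv.Perm X3, (∀ n, Equiv.Perm.sign (π n) = 1) ∧
    ∀ (w : ℕ → X3) (n : ℕ), g w n = π n (w n)}

/-- The subgroup `N` generated by the conjugates `a⁻ⁿ α aⁿ`, `n ∈ ℤ`
(in Lean's composition order: `aⁿ * α * a⁻ⁿ`). -/
def N : Subgroup (Equiv.Perm (ℕ → X3)) :=
  Subgroup.closure {g | ∃ n : ℤ, g = a ^ n * α * a ^ (-n)}

/-!
Over `𝔽₃ = Fin 3`, state `s` acts on letters by `x ↦ label s - x` and moves to a state of label
`-(label s + x)`. Hence the output `y` of state `s` on input `x` satisfies `y₀ = label s - x₀` and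
`yₙ₊₁ + yₙ = xₙ - xₙ₊₁`; read as power series, `(1 + X) y = (X - 1) x + label s`. For `b` this is
the affine map `(1 + X) (b w - 1) = (X - 1) (w - 1)`, so with `m = 3ᵏ` and the Frobenius of
characteristic 3, `(1 + Xᵐ)² (b^{2m} w - 1) = (Xᵐ - 1)² (w - 1)`. Modulo `X^{2m}` this reads
`b^{2m} w ≡ w + Xᵐ (1 - w)`: the letters before position `m` are fixed and the letter at `m` is
shifted by `1 - w₀`.
-/

section

open PowerSeries Fin.CommRing

instance {R : Type*} [Semiring R] (p : ℕ) [CharP R p] : CharP R⟦X⟧ p :=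
  charP_of_injective_ringHom C_injective p

def label : Fin 3 → X3 := ![0, 2, 1]

theorem outA_apply : ∀ s x : Fin 3, outA s x = label s - x := by decide

theorem label_nxtA : ∀ s x : Fin 3, label (nxtA s x) = -(label s + x) := by decide

theorem statePerm_apply (s : Fin 3) (w : ℕ → X3) (n : ℕ) :
    statePerm nxtA outA s w n = label (run nxtA s w n) - w n :=
  outA_apply _ _

theorem statePerm_apply_succ_add (s : Fin 3) (w : ℕ → X3) (n : ℕ) :
    statePerm nxtA outA s w (n + 1) + statePerm nxtA outA s w n = w n - w (n + 1) := by
  rw [statePerm_apply, statePerm_apply, run, label_nxtA]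
  linear_combination (-w n) * CharP.ofNat_eq_zero X3 3

theorem one_add_X_mul_mk_statePerm (s : Fin 3) (w : ℕ → X3) :
    (1 + X) * mk (statePerm nxtA outA s w) = (X - 1) * mk w + C (label s) := by
  ext (_ | n) : 1
  · simp only [add_mul, sub_mul, one_mul, map_add, map_sub, coeff_zero_X_mul, coeff_mk,
      coeff_zero_C, statePerm_apply, run]
    ring
  · simp only [add_mul, sub_mul, one_mul, map_add, map_sub, coeff_succ_X_mul, coeff_mk,
      coeff_C, Nat.succ_ne_zero, if_false, add_zero]
    exact statePerm_apply_succ_add s w n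

theorem one_add_X_mul_mk_b_sub_one (w : ℕ → X3) :
    (1 + X) * (mk (b w) - 1) = (X - 1) * (mk w - 1) := by
  have h : (1 + X) * mk (b w) = (X - 1) * mk w + C (label 1) := one_add_X_mul_mk_statePerm 1 w
  rw [show label 1 = -1 by decide, map_neg, map_one] at h
  linear_combination h - CharP.ofNat_eq_zero X3⟦X⟧ 3

theorem one_add_X_pow_mul_mk_b_pow_sub_one (j : ℕ) (w : ℕ → X3) :
    (1 + X) ^ j * (mk ((b ^ j) w) - 1) = (X - 1) ^ j * (mk w - 1) := by
  induction j generalizing w with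
  | zero => simp
  | succ j ih =>
    rw [pow_succ b, Equiv.Perm.mul_apply]
    linear_combination (1 + X) * ih (b w) + (X - 1) ^ j * one_add_X_mul_mk_b_sub_one w

theorem X_pow_dvd_mk_b_pow_sub (k : ℕ) (w : ℕ → X3) :
    X ^ (2 * 3 ^ k) ∣ mk ((b ^ (2 * 3 ^ k)) w) - (mk w + X ^ 3 ^ k * (1 - mk w)) := by
  have hu : IsUnit ((1 + X : X3⟦X⟧) ^ (2 * 3 ^ k)) :=
    (isUnit_iff_constantCoeff.mpr (by simp)).pow _
  have hplus : (1 + X : X3⟦X⟧) ^ (2 * 3 ^ k) = (1 + X ^ 3 ^ k) ^ 2 := by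
    rw [pow_mul', add_pow_char_pow, one_pow]
  have hminus : (X - 1 : X3⟦X⟧) ^ (2 * 3 ^ k) = (X ^ 3 ^ k - 1) ^ 2 := by
    rw [pow_mul', sub_pow_char_pow, one_pow]
  have h := one_add_X_pow_mul_mk_b_pow_sub_one (2 * 3 ^ k) w
  rw [hplus, hminus] at h
  rw [← hu.dvd_mul_left, hplus]
  -- `(Xᵐ - 1)² - (1 + Xᵐ)² (1 - Xᵐ) = X^{2m} (2 + Xᵐ)` in characteristic 3
  exact ⟨(mk w - 1) * (2 + X ^ 3 ^ k), by
    linear_combination h - X ^ 3 ^ k * (mk w - 1) * CharP.ofNat_eq_zero X3⟦X⟧ 3⟩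

theorem b_pow_apply_of_lt (k : ℕ) (w : ℕ → X3) {i : ℕ} (hi : i < 3 ^ k) :
    (b ^ (2 * 3 ^ k)) w i = w i := by
  have h := X_pow_dvd_iff.mp (X_pow_dvd_mk_b_pow_sub k w) i (by omega)
  simpa [coeff_X_pow_mul', hi.not_ge, sub_eq_zero] using h

theorem b_pow_apply_three_pow (k : ℕ) (w : ℕ → X3) :
    (b ^ (2 * 3 ^ k)) w (3 ^ k) = w (3 ^ k) + 1 - w 0 := by
  have h := X_pow_dvd_iff.mp (X_pow_dvd_mk_b_pow_sub k w) (3 ^ k)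
    (lt_two_mul_self (by positivity))
  simp only [map_sub, map_add, coeff_mk, coeff_X_pow_mul', le_refl, if_true, tsub_self,
    coeff_zero_eq_constantCoeff, constantCoeff_one] at h
  linear_combination h

end

/-- For every `k ≥ 1`, the element `b^{2·3ᵏ}` fixes the word
`1^{3ᵏ}` and permutes the three words `1^{3ᵏ}x` cyclically in the last letter:
`1^{3ᵏ}1 ↦ 1^{3ᵏ}2 ↦ 1^{3ᵏ}3 ↦ 1^{3ᵏ}1`.  (The letter `1` is `0 : Fin 3` and the
cycle `1 ↦ 2 ↦ 3 ↦ 1` is `x ↦ x + 1` on `Fin 3`.) -/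
theorem b_power_cycles_last_letter :
    ∀ k : ℕ, 1 ≤ k → ∀ w : ℕ → X3, (∀ i < 3 ^ k, w i = 0) →
      (∀ i < 3 ^ k, (b ^ (2 * 3 ^ k)) w i = 0) ∧
      (b ^ (2 * 3 ^ k)) w (3 ^ k) = w (3 ^ k) + 1 := by
  intro k _ w hw
  refine ⟨fun i hi => (b_pow_apply_of_lt k w hi).trans (hw i hi), ?_⟩
  rw [b_pow_apply_three_pow, hw 0 (by positivity), sub_zero]

end Lamplighter
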